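/- The partial derivative of the standard bivariate normal CDF Φ₂(x₁, x₂, ρ) with respect to the correlation parameter ρ equals the bivariate normal density φ_Σ(ρ)(x₁, x₂), for |ρ| < 1 (Plackett's identity). -/

import Mathlib

/-!
Conditioning on the first coordinate,
`Φ₂(x₁, x₂, ρ) = ∫_{u ≤ x₁} φ(u) Φ((x₂ - ρu) / √(1 - ρ²)) du`.
The `ρ`-derivative of this integrand is `φ_ρ(u, x₂) (ρx₂ - u) / (1 - ρ²)`, which is exactly
the `u`-derivative of `φ_ρ(u, x₂)`. Differentiating under the integral sign (the derivatives
are dominated by `C (|x₂| + |u|) e^{-u²/4}` uniformly for `ρ²` bounded away from `1`) and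
then integrating in `u` gives `φ_ρ(x₁, x₂)`.
-/

open MeasureTheory Real Filter

noncomputable def stdPdf (x : ℝ) : ℝ := (Real.sqrt (2 * Real.pi))⁻¹ * Real.exp (-x ^ 2 / 2)

noncomputable def stdCdf (x : ℝ) : ℝ := ∫ t in Set.Iic x, stdPdf t

noncomputable def bvnPdf (ρ u v : ℝ) : ℝ :=
  (2 * Real.pi * Real.sqrt (1 - ρ ^ 2))⁻¹ *
    Real.exp (-(u ^ 2 - 2 * ρ * u * v + v ^ 2) / (2 * (1 - ρ ^ 2)))

noncomputable def Phi2 (x₁ x₂ ρ : ℝ) : ℝ :=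
  ∫ u in Set.Iic x₁, ∫ v in Set.Iic x₂, bvnPdf ρ u v

open Set Topology ProbabilityTheory

lemma stdPdf_eq_gaussianPDFReal : stdPdf = gaussianPDFReal 0 1 := by
  ext x
  simp [stdPdf, gaussianPDFReal]

lemma stdPdf_nonneg (x : ℝ) : 0 ≤ stdPdf x := by
  rw [stdPdf_eq_gaussianPDFReal]
  exact gaussianPDFReal_nonneg 0 1 x

lemma continuous_stdPdf : Continuous stdPdf := by
  unfold stdPdf
  fun_prop

lemma integrable_stdPdf : Integrable stdPdf := by
  rw [stdPdf_eq_gaussianPDFReal]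
  exact integrable_gaussianPDFReal 0 1

lemma integral_stdPdf : ∫ x, stdPdf x = 1 := by
  rw [stdPdf_eq_gaussianPDFReal]
  exact integral_gaussianPDFReal_eq_one 0 one_ne_zero

lemma hasDerivAt_integral_Iic {f : ℝ → ℝ} (hf : Continuous f) (hfi : Integrable f) (x : ℝ) :
    HasDerivAt (fun y => ∫ t in Iic y, f t) (f x) x := by
  have hsplit : ∀ y, ∫ t in Iic y, f t = (∫ t in Iic 0, f t) + ∫ t in (0 : ℝ)..y, f t :=
    fun y => by
      rw [← intervalIntegral.integral_Iic_sub_Iic hfi.integrableOn hfi.integrableOn]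
      ring
  rw [show (fun y => ∫ t in Iic y, f t) = _ from funext hsplit]
  exact (hf.integral_hasStrictDerivAt 0 x).hasDerivAt.const_add _

lemma hasDerivAt_stdCdf (x : ℝ) : HasDerivAt stdCdf (stdPdf x) x :=
  hasDerivAt_integral_Iic continuous_stdPdf integrable_stdPdf x

lemma continuous_stdCdf : Continuous stdCdf :=
  continuous_iff_continuousAt.mpr fun x => (hasDerivAt_stdCdf x).continuousAt

lemma tendsto_stdCdf_atBot : Tendsto stdCdf atBot (𝓝 0) :=
  tendsto_integral_Iic_zero tendsto_id

lemma abs_stdCdf_le_one (x : ℝ) : |stdCdf x| ≤ 1 := by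
  rw [stdCdf, abs_of_nonneg (integral_nonneg stdPdf_nonneg), ← integral_stdPdf]
  exact setIntegral_le_integral integrable_stdPdf (.of_forall stdPdf_nonneg)

lemma bvnPdf_comm (r u v : ℝ) : bvnPdf r u v = bvnPdf r v u := by
  unfold bvnPdf
  ring_nf

lemma continuous_bvnPdf_left (r v : ℝ) : Continuous fun u => bvnPdf r u v := by
  unfold bvnPdf
  fun_prop

lemma bvnPdf_eq_stdPdf_mul {r : ℝ} (hr : r ^ 2 < 1) (u v : ℝ) :
    bvnPdf r u v =
      stdPdf u * ((√(1 - r ^ 2))⁻¹ * stdPdf ((v - r * u) / √(1 - r ^ 2))) := by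
  have h1 : 0 < 1 - r ^ 2 := by linarith
  have hexp : -(u ^ 2 - 2 * r * u * v + v ^ 2) / (2 * (1 - r ^ 2)) =
      -u ^ 2 / 2 + -((v - r * u) / √(1 - r ^ 2)) ^ 2 / 2 := by
    rw [div_pow, sq_sqrt h1.le]
    field_simp
    ring
  have hconst : (2 * π * √(1 - r ^ 2))⁻¹ =
      (√(2 * π))⁻¹ * ((√(1 - r ^ 2))⁻¹ * (√(2 * π))⁻¹) := by
    rw [← mul_inv, ← mul_inv, mul_comm (√(1 - r ^ 2)), ← mul_assoc,
      mul_self_sqrt (by positivity)]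
  unfold bvnPdf stdPdf
  rw [hexp, exp_add, hconst]
  ring

lemma integrable_bvnPdf {r : ℝ} (hr : r ^ 2 < 1) (u : ℝ) : Integrable (bvnPdf r u) := by
  have hs : √(1 - r ^ 2) ≠ 0 := (sqrt_pos.mpr (by linarith)).ne'
  have h := ((integrable_stdPdf.comp_div hs).comp_sub_right (r * u)).const_mul
    (stdPdf u * (√(1 - r ^ 2))⁻¹)
  refine h.congr (.of_forall fun v => ?_)
  simp only [bvnPdf_eq_stdPdf_mul hr, mul_assoc]

lemma integral_Iic_bvnPdf {r : ℝ} (hr : r ^ 2 < 1) (u y : ℝ) :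
    ∫ v in Iic y, bvnPdf r u v = stdPdf u * stdCdf ((y - r * u) / √(1 - r ^ 2)) := by
  have hs : 0 < √(1 - r ^ 2) := sqrt_pos.mpr (by linarith)
  have hderiv : ∀ v, HasDerivAt (fun y => stdPdf u * stdCdf ((y - r * u) / √(1 - r ^ 2)))
      (bvnPdf r u v) v := fun v => by
    have hz : HasDerivAt (fun y => (y - r * u) / √(1 - r ^ 2)) (1 / √(1 - r ^ 2)) v :=
      ((hasDerivAt_id v).sub_const _).div_const _
    refine (((hasDerivAt_stdCdf _).comp v hz).const_mul (stdPdf u)).congr_deriv ?_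
    rw [bvnPdf_eq_stdPdf_mul hr]
    ring
  have hlim :
      Tendsto (fun y => stdPdf u * stdCdf ((y - r * u) / √(1 - r ^ 2))) atBot (𝓝 0) := by
    have hz : Tendsto (fun y => (y - r * u) / √(1 - r ^ 2)) atBot atBot :=
      (tendsto_atBot_add_const_right _ _ tendsto_id).atBot_div_const hs
    simpa using (tendsto_stdCdf_atBot.comp hz).const_mul (stdPdf u)
  rw [integral_Iic_of_hasDerivAt_of_tendsto' (fun v _ => hderiv v)
    (integrable_bvnPdf hr u).integrableOn hlim, sub_zero]

lemma Phi2_eq_integral_stdPdf_mul_stdCdf {r : ℝ} (hr : r ^ 2 < 1) (x₁ x₂ : ℝ) :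
    Phi2 x₁ x₂ r = ∫ u in Iic x₁, stdPdf u * stdCdf ((x₂ - r * u) / √(1 - r ^ 2)) := by
  simp only [Phi2, integral_Iic_bvnPdf hr]

lemma hasDerivAt_bvnPdf_left (r u v : ℝ) :
    HasDerivAt (fun u => bvnPdf r u v) (bvnPdf r u v * ((r * v - u) / (1 - r ^ 2))) u := by
  have hq : HasDerivAt (fun u => u ^ 2 - 2 * r * u * v + v ^ 2) (2 * u - 2 * r * v) u := by
    have hlin := ((hasDerivAt_id' u).const_mul (2 * r)).mul_const v
    exact (((hasDerivAt_pow 2 u).sub hlin).add_const (v ^ 2)).congr_deriv (by norm_num)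
  have hexponent : HasDerivAt (fun u => -(u ^ 2 - 2 * r * u * v + v ^ 2) / (2 * (1 - r ^ 2)))
      (-(2 * u - 2 * r * v) / (2 * (1 - r ^ 2))) u :=
    hq.neg.div_const _
  have hslope : -(2 * u - 2 * r * v) / (2 * (1 - r ^ 2)) = (r * v - u) / (1 - r ^ 2) := by
    rw [mul_comm, ← div_div]
    ring
  rw [hslope] at hexponent
  rw [bvnPdf, mul_assoc]
  exact hexponent.exp.const_mul _

lemma hasDerivAt_stdPdf_mul_stdCdf {r : ℝ} (hr : r ^ 2 < 1) (u v : ℝ) :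
    HasDerivAt (fun r => stdPdf u * stdCdf ((v - r * u) / √(1 - r ^ 2)))
      (bvnPdf r u v * ((r * v - u) / (1 - r ^ 2))) r := by
  have h1 : 0 < 1 - r ^ 2 := by linarith
  have hs : 0 < √(1 - r ^ 2) := sqrt_pos.mpr h1
  have hsqrt : HasDerivAt (fun r => √(1 - r ^ 2)) (-r / √(1 - r ^ 2)) r := by
    have h := ((hasDerivAt_pow 2 r).const_sub 1).sqrt h1.ne'
    refine h.congr_deriv ?_
    field_simp
    ring
  have hz : HasDerivAt (fun r => (v - r * u) / √(1 - r ^ 2))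
      ((r * v - u) / (1 - r ^ 2) / √(1 - r ^ 2)) r := by
    have h := (((hasDerivAt_id r).mul_const u).const_sub v).div hsqrt hs.ne'
    refine h.congr_deriv ?_
    simp only [id]
    field_simp
    rw [sq_sqrt h1.le]
    ring
  refine (((hasDerivAt_stdCdf _).comp r hz).const_mul (stdPdf u)).congr_deriv ?_
  rw [bvnPdf_eq_stdPdf_mul hr]
  ring

lemma bvnPdf_nonneg (r u v : ℝ) : 0 ≤ bvnPdf r u v := by
  unfold bvnPdf
  positivity

lemma bvnPdf_le {r c : ℝ} (hr : r ^ 2 ≤ c) (hc : c < 1) (u v : ℝ) :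
    bvnPdf r u v ≤ (2 * π * √(1 - c))⁻¹ * exp (v ^ 2 / 2) * exp (-4⁻¹ * u ^ 2) := by
  have h1 : 0 < 1 - r ^ 2 := by linarith
  -- `u² - 2ruv + v² - (1 - r²)(u²/2 - 2v²)`
  -- `  = r²(u - rv)² + (1 - r²)((u - 2rv)²/2 + (2 - r²)v²)`
  have hexp : -(u ^ 2 - 2 * r * u * v + v ^ 2) / (2 * (1 - r ^ 2)) ≤
      v ^ 2 / 2 + -4⁻¹ * u ^ 2 := by
    rw [div_le_iff₀ (by positivity)]
    nlinarith [mul_nonneg (sq_nonneg r) (sq_nonneg (u - r * v)),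
      mul_nonneg h1.le (sq_nonneg (u - 2 * r * v)),
      mul_nonneg h1.le (mul_nonneg (by linarith : 0 ≤ 2 - r ^ 2) (sq_nonneg v))]
  calc bvnPdf r u v ≤ (2 * π * √(1 - c))⁻¹ * exp (v ^ 2 / 2 + -4⁻¹ * u ^ 2) := by
        unfold bvnPdf
        gcongr
    _ = _ := by rw [exp_add]; ring

lemma norm_bvnPdf_mul_le {r c : ℝ} (hr : r ^ 2 ≤ c) (hc : c < 1) (u v : ℝ) :
    ‖bvnPdf r u v * ((r * v - u) / (1 - r ^ 2))‖ ≤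
      (2 * π * √(1 - c))⁻¹ * exp (v ^ 2 / 2) / (1 - c) *
        ((|v| + |u|) * exp (-4⁻¹ * u ^ 2)) := by
  have h1 : 0 < 1 - c := by linarith
  have hr1 : |r| ≤ 1 := by rw [← sq_le_one_iff_abs_le_one]; linarith
  have hnum : |r * v - u| ≤ |v| + |u| :=
    calc |r * v - u| ≤ |r| * |v| + |u| := by rw [← abs_mul]; exact abs_sub _ _
      _ ≤ |v| + |u| := by gcongr; nlinarith [abs_nonneg v]
  have hfactor : |r * v - u| / (1 - r ^ 2) ≤ (|v| + |u|) / (1 - c) :=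
    div_le_div₀ (by positivity) hnum h1 (by linarith)
  rw [norm_mul, norm_div, Real.norm_of_nonneg (bvnPdf_nonneg r u v), Real.norm_eq_abs,
    Real.norm_of_nonneg (by linarith)]
  calc bvnPdf r u v * (|r * v - u| / (1 - r ^ 2))
      ≤ (2 * π * √(1 - c))⁻¹ * exp (v ^ 2 / 2) * exp (-4⁻¹ * u ^ 2) *
          ((|v| + |u|) / (1 - c)) :=
        mul_le_mul (bvnPdf_le hr hc u v) hfactor (div_nonneg (abs_nonneg _) (by linarith))
          (by positivity)
    _ = _ := by ring

lemma integrable_add_abs_mul_exp_neg_mul_sq {b : ℝ} (hb : 0 < b) (c : ℝ) :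
    Integrable fun u : ℝ => (c + |u|) * exp (-b * u ^ 2) := by
  have h := ((integrable_exp_neg_mul_sq hb).const_mul c).add
    (integrable_mul_exp_neg_mul_sq hb).norm
  refine h.congr (.of_forall fun u => ?_)
  change c * exp (-b * u ^ 2) + ‖u * exp (-b * u ^ 2)‖ = _
  rw [norm_mul, Real.norm_eq_abs, Real.norm_eq_abs, abs_exp]
  ring

lemma hasDerivAt_integral_Iic_stdPdf_mul_stdCdf {ρ : ℝ} (hρ : ρ ^ 2 < 1) (a v : ℝ) :
    HasDerivAt (fun r => ∫ u in Iic a, stdPdf u * stdCdf ((v - r * u) / √(1 - r ^ 2)))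
      (∫ u in Iic a, bvnPdf ρ u v * ((ρ * v - u) / (1 - ρ ^ 2))) ρ := by
  obtain ⟨c, hρc, hc⟩ := exists_between hρ
  have hnhds : {r : ℝ | r ^ 2 < c} ∈ 𝓝 ρ :=
    (isOpen_lt (continuous_pow 2) continuous_const).mem_nhds hρc
  have hcdf : ∀ r, Continuous fun u => stdCdf ((v - r * u) / √(1 - r ^ 2)) :=
    fun r => continuous_stdCdf.comp (by fun_prop)
  have hint : Integrable fun u => stdPdf u * stdCdf ((v - ρ * u) / √(1 - ρ ^ 2)) :=
    integrable_stdPdf.mul_bdd (hcdf ρ).aestronglyMeasurable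
      (.of_forall fun u => abs_stdCdf_le_one _)
  refine (hasDerivAt_integral_of_dominated_loc_of_deriv_le hnhds
    (.of_forall fun r => (continuous_stdPdf.mul (hcdf r)).aestronglyMeasurable) hint.integrableOn
    ((continuous_bvnPdf_left ρ v).mul (by fun_prop)).aestronglyMeasurable
    (.of_forall fun u r hr => norm_bvnPdf_mul_le (le_of_lt hr) hc u v)
    ((integrable_add_abs_mul_exp_neg_mul_sq (by norm_num) |v|).const_mul _).integrableOn
    (.of_forall fun u r hr => hasDerivAt_stdPdf_mul_stdCdf (hr.trans hc) u v)).2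

lemma integral_Iic_bvnPdf_mul {r : ℝ} (hr : r ^ 2 < 1) (a v : ℝ) :
    ∫ u in Iic a, bvnPdf r u v * ((r * v - u) / (1 - r ^ 2)) = bvnPdf r a v := by
  have hderiv := fun u (_ : u ∈ Iic a) => hasDerivAt_bvnPdf_left r u v
  have hint : Integrable fun u => bvnPdf r u v * ((r * v - u) / (1 - r ^ 2)) :=
    ((integrable_add_abs_mul_exp_neg_mul_sq (by norm_num) |v|).const_mul _).mono'
      ((continuous_bvnPdf_left r v).mul (by fun_prop)).aestronglyMeasurable
      (.of_forall fun u => norm_bvnPdf_mul_le le_rfl hr u v)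
  have hbvn : Integrable fun u => bvnPdf r u v := by
    simpa only [bvnPdf_comm r _ v] using integrable_bvnPdf hr v
  have hlim := tendsto_zero_of_hasDerivAt_of_integrableOn_Iic hderiv hint.integrableOn
    hbvn.integrableOn
  rw [integral_Iic_of_hasDerivAt_of_tendsto' hderiv hint.integrableOn hlim, sub_zero]

theorem stmt_1 (ρ : ℝ) (hρ : |ρ| < 1) (x₁ x₂ : ℝ) :
    HasDerivAt (fun r => Phi2 x₁ x₂ r) (bvnPdf ρ x₁ x₂) ρ := by
  have hρ2 : ρ ^ 2 < 1 := (sq_lt_one_iff_abs_lt_one ρ).mpr hρ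
  have hnhds : {r : ℝ | r ^ 2 < 1} ∈ 𝓝 ρ :=
    (isOpen_lt (continuous_pow 2) continuous_const).mem_nhds hρ2
  rw [← integral_Iic_bvnPdf_mul hρ2 x₁ x₂]
  refine (hasDerivAt_integral_Iic_stdPdf_mul_stdCdf hρ2 x₁ x₂).congr_of_eventuallyEq ?_
  filter_upwards [hnhds] with r hr using Phi2_eq_integral_stdPdf_mul_stdCdf hr x₁ x₂
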